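/- Let f : S^{p-1} → (0,∞) be a (almost everywhere positive) probability density with respect to the surface measure on the unit sphere. Define g(x) = ‖x‖ · f(x/‖x‖)^{-1/p} for x ∈ ℝᵖ \ {0}. Then g is positively homogeneous of degree 1, and for any star-shaped density of the form f_G(g(x)) (a probability density with respect to Lebesgue measure), the direction z' = x/‖x‖ of a random vector x with this density has exactly the distribution f(z') dz' on S^{p-1}. -/

import Mathlib

/-!
In polar coordinates `x = r • z` the star-shaped density is `fG (r * g z)`, by homogeneity of `g`.
Integrating out the radius against `r ^ (p - 1) dr` and substituting `s = r * g z` leaves the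
constant radial integral `I = ∫ s ^ (p - 1) fG s ds` times `g z ^ (-p)`, so the direction has
density `I * g z ^ (-p)`. With `g z = f z ^ (-1/p)` on the sphere this is `I * f z`, and comparing
total masses gives `I = 1`.
-/

open MeasureTheory Set Metric Module
open scoped ENNReal

theorem lintegral_Ioi_comp_mul_right (φ : ℝ → ℝ≥0∞) {c : ℝ} (hc : 0 < c) :
    ∫⁻ r in Ioi 0, φ (r * c) = ENNReal.ofReal c⁻¹ * ∫⁻ s in Ioi 0, φ s := by
  have hemb : MeasurableEmbedding (· * c) :=
    (Homeomorph.mulRight₀ c hc.ne').measurableEmbedding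
  calc ∫⁻ r in Ioi 0, φ (r * c) = ∫⁻ r in (· * c) ⁻¹' Ioi 0, φ (r * c) := by
        rw [preimage_mul_const_Ioi₀ 0 hc, zero_div]
    _ = ∫⁻ s in Ioi 0, φ s ∂(Measure.map (· * c) volume) := by
        rw [hemb.restrict_map, hemb.lintegral_map]
    _ = ENNReal.ofReal c⁻¹ * ∫⁻ s in Ioi 0, φ s := by
        rw [Real.map_volume_mul_right hc.ne', abs_of_pos (inv_pos.2 hc), Measure.restrict_smul,
          lintegral_smul_measure, smul_eq_mul]

theorem lintegral_Ioi_pow_mul_comp_mul_right (φ : ℝ → ℝ≥0∞) (n : ℕ) {c : ℝ} (hc : 0 < c) :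
    ∫⁻ r in Ioi 0, ENNReal.ofReal (r ^ n) * φ (r * c) =
      ENNReal.ofReal (c ^ (n + 1))⁻¹ * ∫⁻ s in Ioi 0, ENNReal.ofReal (s ^ n) * φ s := by
  have hcn : ENNReal.ofReal (c ^ n) ≠ 0 := by positivity
  have hscaled : ENNReal.ofReal (c ^ n) * ∫⁻ r in Ioi 0, ENNReal.ofReal (r ^ n) * φ (r * c) =
      ENNReal.ofReal c⁻¹ * ∫⁻ s in Ioi 0, ENNReal.ofReal (s ^ n) * φ s := by
    rw [← lintegral_Ioi_comp_mul_right _ hc, ← lintegral_const_mul' _ _ ENNReal.ofReal_ne_top]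
    refine setLIntegral_congr_fun measurableSet_Ioi fun r _ => ?_
    rw [mul_pow, mul_comm (r ^ n), ENNReal.ofReal_mul (pow_nonneg hc.le n), mul_assoc]
  rw [ENNReal.ofReal_inv_of_pos (by positivity), pow_succ, ENNReal.ofReal_mul (by positivity),
    ENNReal.mul_inv (Or.inl hcn) (Or.inl ENNReal.ofReal_ne_top), mul_assoc,
    ← ENNReal.ofReal_inv_of_pos hc, ← hscaled, ← mul_assoc,
    ENNReal.inv_mul_cancel hcn ENNReal.ofReal_ne_top, one_mul]

theorem lintegral_volumeIoiPow (n : ℕ) (F : ℝ → ℝ≥0∞) :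
    ∫⁻ r, F r ∂Measure.volumeIoiPow n = ∫⁻ r in Ioi 0, ENNReal.ofReal (r ^ n) * F r := by
  rw [Measure.volumeIoiPow, lintegral_withDensity_eq_lintegral_mul_non_measurable _
    (measurable_subtype_coe.pow_const n).ennreal_ofReal
    (Filter.Eventually.of_forall fun _ => ENNReal.ofReal_lt_top)]
  exact lintegral_subtype_comap measurableSet_Ioi (fun r => ENNReal.ofReal (r ^ n) * F r)

section Polar

variable {E : Type*} [NormedAddCommGroup E] [NormedSpace ℝ E] [FiniteDimensional ℝ E]
  [Nontrivial E] [MeasurableSpace E] [BorelSpace E]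

theorem lintegral_eq_lintegral_sphere_lintegral_Ioi (μ : Measure E) [μ.IsAddHaarMeasure]
    {H : E → ℝ≥0∞} (hH : Measurable H) :
    ∫⁻ x, H x ∂μ = ∫⁻ z, (∫⁻ r in Ioi (0 : ℝ),
      ENNReal.ofReal (r ^ (finrank ℝ E - 1)) * H (r • z.1)) ∂μ.toSphere := by
  calc ∫⁻ x, H x ∂μ = ∫⁻ x : ({0}ᶜ : Set E), H x ∂μ.comap (↑) := by
        rw [lintegral_subtype_comap (measurableSet_singleton 0).compl, restrict_compl_singleton]
    _ = ∫⁻ w, H (w.2.1 • w.1.1) ∂μ.toSphere.prod (Measure.volumeIoiPow (finrank ℝ E - 1)) := by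
        rw [← (Measure.measurePreserving_homeomorphUnitSphereProd μ).lintegral_comp_emb
          (homeomorphUnitSphereProd E).measurableEmbedding]
        refine lintegral_congr fun x => ?_
        rw [homeomorphUnitSphereProd_apply_snd_coe, homeomorphUnitSphereProd_apply_fst_coe,
          smul_inv_smul₀ (norm_ne_zero_iff.2 x.2)]
    _ = _ := by
        rw [lintegral_prod _ (by fun_prop)]
        exact lintegral_congr fun z => lintegral_volumeIoiPow _ fun r => H (r • z.1)

theorem map_normalize_withDensity_comp_homogeneous (μ : Measure E) [μ.IsAddHaarMeasure]
    {g : E → ℝ} (hg : Measurable g)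
    (hg_smul : ∀ t : ℝ, 0 < t → ∀ x : E, x ≠ 0 → g (t • x) = t * g x)
    (hg_pos : ∀ z ∈ sphere (0 : E) 1, 0 < g z) {φ : ℝ → ℝ≥0∞} (hφ : Measurable φ) :
    (μ.withDensity fun x => φ (g x)).map (fun x => ‖x‖⁻¹ • x) =
      (∫⁻ s in Ioi 0, ENNReal.ofReal (s ^ (finrank ℝ E - 1)) * φ s) •
        (μ.toSphere.withDensity fun z => ENNReal.ofReal (g z ^ finrank ℝ E)⁻¹).map
          Subtype.val := by
  set n := finrank ℝ E
  set I := ∫⁻ s in Ioi 0, ENNReal.ofReal (s ^ (n - 1)) * φ s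
  have hn : n - 1 + 1 = n := Nat.sub_add_cancel finrank_pos
  have hdir : Measurable fun x : E => ‖x‖⁻¹ • x := by fun_prop
  ext A hA
  have hradial : ∀ z : sphere (0 : E) 1,
      ∫⁻ r in Ioi 0, ENNReal.ofReal (r ^ (n - 1)) *
          ((fun x : E => ‖x‖⁻¹ • x) ⁻¹' A).indicator (fun x => φ (g x)) (r • z.1) =
        (Subtype.val ⁻¹' A).indicator (fun z => ENNReal.ofReal (g z ^ n)⁻¹ * I) z := by
    intro z
    have hz := ne_zero_of_mem_unit_sphere z
    have hnormalize : ∀ r : ℝ, 0 < r → ‖r • z.1‖⁻¹ • r • z.1 = z.1 := fun r hr => by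
      rw [norm_smul, norm_eq_of_mem_sphere, mul_one, Real.norm_of_nonneg hr.le,
        inv_smul_smul₀ hr.ne']
    by_cases hzA : z.1 ∈ A
    · have hscale := lintegral_Ioi_pow_mul_comp_mul_right φ (n - 1) (hg_pos z z.2)
      rw [hn] at hscale
      rw [indicator_of_mem (show z ∈ Subtype.val ⁻¹' A from hzA), ← hscale]
      refine setLIntegral_congr_fun measurableSet_Ioi fun r hr => ?_
      rw [indicator_of_mem (by rwa [mem_preimage, hnormalize r hr]), hg_smul r hr z hz]
    · rw [indicator_of_notMem (show z ∉ Subtype.val ⁻¹' A from hzA)]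
      refine (setLIntegral_congr_fun measurableSet_Ioi fun r hr => ?_).trans lintegral_zero
      rw [indicator_of_notMem (by rwa [mem_preimage, hnormalize r hr]), mul_zero]
  have hH : Measurable (((fun x : E => ‖x‖⁻¹ • x) ⁻¹' A).indicator fun x => φ (g x)) :=
    (hφ.comp hg).indicator (hdir hA)
  rw [Measure.map_apply hdir hA, withDensity_apply _ (hdir hA), ← lintegral_indicator (hdir hA),
    lintegral_eq_lintegral_sphere_lintegral_Ioi μ hH,
    lintegral_congr hradial, lintegral_indicator (measurable_subtype_coe hA),
    lintegral_mul_const I (f := fun z : sphere (0 : E) 1 => ENNReal.ofReal (g z ^ n)⁻¹)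
      (by fun_prop),
    Measure.smul_apply, Measure.map_apply measurable_subtype_coe hA,
    withDensity_apply _ (measurable_subtype_coe hA), smul_eq_mul, mul_comm]

theorem map_normalize_withDensity_comp_homogeneous_of_isProbabilityMeasure (μ : Measure E)
    [μ.IsAddHaarMeasure] {g : E → ℝ} (hg : Measurable g)
    (hg_smul : ∀ t : ℝ, 0 < t → ∀ x : E, x ≠ 0 → g (t • x) = t * g x)
    (hg_pos : ∀ z ∈ sphere (0 : E) 1, 0 < g z) {φ : ℝ → ℝ≥0∞} (hφ : Measurable φ)
    [IsProbabilityMeasure (μ.withDensity fun x => φ (g x))]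
    (hmass : ∫⁻ z, ENNReal.ofReal (g z ^ finrank ℝ E)⁻¹ ∂μ.toSphere = 1) :
    (μ.withDensity fun x => φ (g x)).map (fun x => ‖x‖⁻¹ • x) =
      (μ.toSphere.withDensity fun z => ENNReal.ofReal (g z ^ finrank ℝ E)⁻¹).map
          Subtype.val := by
  have hlaw := map_normalize_withDensity_comp_homogeneous μ hg hg_smul hg_pos hφ
  have hradial_mass := congrArg (· univ) hlaw
  rw [Measure.map_apply (by fun_prop) .univ, preimage_univ, measure_univ, Measure.smul_apply,
    Measure.map_apply measurable_subtype_coe .univ, preimage_univ, withDensity_apply _ .univ,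
    Measure.restrict_univ, hmass, smul_eq_mul, mul_one] at hradial_mass
  rw [hlaw, ← hradial_mass, one_smul]

end Polar

theorem lintegral_ofReal_eq_one_of_integral_eq_one {α : Type*} [MeasurableSpace α]
    {μ : Measure α} {f : α → ℝ} (hf : 0 ≤ᵐ[μ] f) (h : ∫ x, f x ∂μ = 1) :
    ∫⁻ x, ENNReal.ofReal (f x) ∂μ = 1 := by
  rw [← ofReal_integral_eq_lintegral_ofReal (.of_integral_ne_zero (h ▸ one_ne_zero)) hf, h,
    ENNReal.ofReal_one]

theorem norm_mul_comp_normalize_smul {F : Type*} [NormedAddCommGroup F] [NormedSpace ℝ F]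
    (ψ : F → ℝ) {t : ℝ} (ht : 0 < t) (x : F) :
    ‖t • x‖ * ψ (‖t • x‖⁻¹ • t • x) = t * (‖x‖ * ψ (‖x‖⁻¹ • x)) := by
  rw [norm_smul, Real.norm_of_nonneg ht.le, smul_smul, mul_inv_rev, inv_mul_cancel_right₀ ht.ne',
    mul_assoc]

/-- Given an (a.e.) positive probability density `f` on the unit sphere `S^{p-1}`,
the function `g(x) = ‖x‖ f(x/‖x‖)^{-1/p}` is positively homogeneous of degree 1, and
for any star-shaped probability density `f_G(g(x))`, the direction `z' = x/‖x‖` has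
exactly the distribution `f(z') dz'` on the sphere. -/
theorem stmt18 (p : ℕ) (hp : 0 < p)
    (f : EuclideanSpace ℝ (Fin p) → ℝ) (hfmeas : Measurable f)
    (hfpos : ∀ u ∈ Metric.sphere (0 : EuclideanSpace ℝ (Fin p)) 1, 0 < f u)
    (hfint : ∫ u : Metric.sphere (0 : EuclideanSpace ℝ (Fin p)) 1,
        f u.1 ∂(volume : Measure (EuclideanSpace ℝ (Fin p))).toSphere = 1)
    (g : EuclideanSpace ℝ (Fin p) → ℝ)
    (hg : ∀ x : EuclideanSpace ℝ (Fin p),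
      g x = ‖x‖ * (f (‖x‖⁻¹ • x)) ^ (-(1 / (p : ℝ)))) :
    (∀ t : ℝ, 0 < t → ∀ x : EuclideanSpace ℝ (Fin p), x ≠ 0 →
      g (t • x) = t * g x) ∧
    (∀ fG : ℝ → ℝ, Measurable fG → (∀ t, 0 ≤ fG t) →
      ∀ μ : Measure (EuclideanSpace ℝ (Fin p)),
        μ = volume.withDensity (fun x => ENNReal.ofReal (fG (g x))) →
        IsProbabilityMeasure μ →
        Measure.map (fun x => ‖x‖⁻¹ • x) μ =
          Measure.map Subtype.val
            (((volume : Measure (EuclideanSpace ℝ (Fin p))).toSphere).withDensity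
              fun u => ENNReal.ofReal (f u.1))) := by
  have : Nonempty (Fin p) := ⟨⟨0, hp⟩⟩
  have hhom : ∀ t : ℝ, 0 < t → ∀ x, x ≠ 0 → g (t • x) = t * g x := fun t ht x _ => by
    rw [hg, hg]
    exact norm_mul_comp_normalize_smul (fun y => f y ^ (-(1 / (p : ℝ)))) ht x
  have hg_sphere : ∀ z ∈ sphere (0 : EuclideanSpace ℝ (Fin p)) 1, g z = f z ^ (-(1 / (p : ℝ))) :=
    fun z hz => by rw [hg, mem_sphere_zero_iff_norm.1 hz, inv_one, one_smul, one_mul]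
  have hg_pow : ∀ z ∈ sphere (0 : EuclideanSpace ℝ (Fin p)) 1, (g z ^ p)⁻¹ = f z := fun z hz => by
    rw [hg_sphere z hz, ← Real.rpow_natCast, ← Real.rpow_mul (hfpos z hz).le,
      neg_mul, one_div_mul_cancel (Nat.cast_ne_zero.2 hp.ne'), Real.rpow_neg_one, inv_inv]
  have hgm : Measurable g := by
    rw [funext hg]
    fun_prop
  refine ⟨hhom, fun fG hfG _ μ hμ hprob => ?_⟩
  subst hμ
  have hlaw := map_normalize_withDensity_comp_homogeneous_of_isProbabilityMeasure volume hgm hhom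
    (fun z hz => hg_sphere z hz ▸ Real.rpow_pos_of_pos (hfpos z hz) _) hfG.ennreal_ofReal
  simp only [finrank_euclideanSpace_fin, fun z : sphere _ _ => hg_pow z.1 z.2] at hlaw
  exact hlaw (lintegral_ofReal_eq_one_of_integral_eq_one (ae_of_all _ fun z => (hfpos z z.2).le)
    hfint)
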